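/- Let H, r, μ be as in the general setup, let A, B be nonempty disjoint subsets of H, and let h = h_{A,B} and h† = h†_{A,B} be the equilibrium potentials between A and B for the rates r and for the adjoint rates r†(x,y) = μ(y)r(y,x)/μ(x), respectively. Then CAP(A,B) = sup over all functions g: H → ℝ with g ≡ 0 on A∪B and all nonzero flows ψ of the quantity (1/‖Φ_g − ψ‖²)·[ Σ_{x∈H} h_{A,B}(x)·(DIV ψ)(x) ]²; moreover every nonzero constant multiple of the pair g = (h† − h)/(2·CAP(A,B)), ψ = (Φ_{h†} + Φ_h^*)/(2·CAP(A,B)) is a maximizer. -/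
import Mathlib


open Finset

variable {H : Type*}

/-- The symmetrized conductance `c^s(x,y) = (μ(x)r(x,y) + μ(y)r(y,x))/2`. -/
noncomputable def sconduct (μ : H → ℝ) (r : H → H → ℝ) (x y : H) : ℝ :=
  (μ x * r x y + μ y * r y x) / 2

/-- A flow: an antisymmetric function on pairs, supported on the edge set
`E = {(x,y) : c^s(x,y) > 0}`. -/
def IsFlow (μ : H → ℝ) (r : H → H → ℝ) (φ : H → H → ℝ) : Prop :=
  (∀ x y, φ x y = -φ y x) ∧ ∀ x y, sconduct μ r x y = 0 → φ x y = 0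

/-- The squared flow norm `‖φ‖² = (1/2) Σ_{(x,y)} φ(x,y)²/c^s(x,y)`. -/
noncomputable def flowNorm2 [Fintype H] (μ : H → ℝ) (r : H → H → ℝ) (φ : H → H → ℝ) : ℝ :=
  (1 / 2) * ∑ x, ∑ y, φ x y ^ 2 / sconduct μ r x y

/-- The divergence `(DIV φ)(x) = Σ_y φ(x,y)`. -/
noncomputable def flowDiv [Fintype H] (φ : H → H → ℝ) (x : H) : ℝ := ∑ y, φ x y

/-- The flow `Φ_f(x,y) = f(y)c(y,x) − f(x)c(x,y)` associated to a function `f`. -/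
noncomputable def PhiFlow (μ : H → ℝ) (r : H → H → ℝ) (f : H → ℝ) (x y : H) : ℝ :=
  f y * (μ y * r y x) - f x * (μ x * r x y)

/-- The flow `Φ*_f(x,y) = f(y)c(x,y) − f(x)c(y,x)` associated to a function `f`. -/
noncomputable def PhiStar (μ : H → ℝ) (r : H → H → ℝ) (f : H → ℝ) (x y : H) : ℝ :=
  f y * (μ x * r x y) - f x * (μ y * r y x)

/-- The capacity (Dirichlet form) `(1/2) Σ_{x,y} μ(x)r(x,y)(h(y)−h(x))²` of a function. -/
noncomputable def capacityOf [Fintype H] (μ : H → ℝ) (r : H → H → ℝ) (h : H → ℝ) : ℝ :=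
  (1 / 2) * ∑ x, ∑ y, μ x * r x y * (h y - h x) ^ 2

/-- `h` is the equilibrium potential between `A` and `B` for the rates `r`:
`h ≡ 1` on `A`, `h ≡ 0` on `B`, and `h` is harmonic off `A ∪ B`. -/
def IsEqPotential [Fintype H] (r : H → H → ℝ) (A B : Set H) (h : H → ℝ) : Prop :=
  (∀ a ∈ A, h a = 1) ∧ (∀ b ∈ B, h b = 0) ∧
    ∀ x, x ∉ A ∪ B → ∑ y, r x y * (h y - h x) = 0

lemma sum_swap' [Fintype H] (F : H → H → ℝ) : ∑ x, ∑ y, F x y = ∑ x, ∑ y, F y x :=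
  Finset.sum_comm

lemma sum_antisym [Fintype H] (h : H → ℝ) (φ : H → H → ℝ) (hanti : ∀ x y, φ x y = -φ y x) :
    ∑ x, ∑ y, h x * φ x y = (1/2) * ∑ x, ∑ y, (h x - h y) * φ x y := by
  have h2 : ∑ x, ∑ y, h y * φ x y = ∑ x, ∑ y, h x * -φ x y := by
    rw [sum_swap' (fun x y => h y * φ x y)]
    exact Finset.sum_congr rfl fun x _ => Finset.sum_congr rfl fun y _ => by rw [hanti y x]
  have h3 : ∑ x, ∑ y, (h x - h y) * φ x y
      = ∑ x, ∑ y, h x * φ x y - ∑ x, ∑ y, h y * φ x y := by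
    simp [sub_mul, Finset.sum_sub_distrib]
  rw [h3, h2]
  simp only [mul_neg, Finset.sum_neg_distrib]
  ring

lemma sym_cap [Fintype H] (μ : H → ℝ) (r : H → H → ℝ) (h : H → ℝ) :
    ∑ x, ∑ y, sconduct μ r x y * (h y - h x) ^ 2
      = ∑ x, ∑ y, μ x * r x y * (h y - h x) ^ 2 := by
  have h1 : ∑ x, ∑ y, μ y * r y x * (h y - h x) ^ 2
      = ∑ x, ∑ y, μ x * r x y * (h y - h x) ^ 2 := by
    rw [sum_swap' (fun x y => μ y * r y x * (h y - h x) ^ 2)]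
    exact Finset.sum_congr rfl fun x _ => Finset.sum_congr rfl fun y _ => by ring
  calc ∑ x, ∑ y, sconduct μ r x y * (h y - h x) ^ 2
      = ∑ x, ∑ y, (μ x * r x y * (h y - h x) ^ 2 + μ y * r y x * (h y - h x) ^ 2) / 2 :=
        Finset.sum_congr rfl fun x _ => Finset.sum_congr rfl fun y _ => by
          simp only [sconduct]; ring
    _ = ((∑ x, ∑ y, μ x * r x y * (h y - h x) ^ 2)
          + ∑ x, ∑ y, μ y * r y x * (h y - h x) ^ 2) / 2 := by
        rw [← Finset.sum_add_distrib, Finset.sum_div]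
        exact Finset.sum_congr rfl fun x _ => by
          rw [← Finset.sum_add_distrib, Finset.sum_div]
    _ = ∑ x, ∑ y, μ x * r x y * (h y - h x) ^ 2 := by rw [h1]; ring

lemma cs_double [Fintype H] (μ : H → ℝ) (r : H → H → ℝ) (h : H → ℝ) (φ : H → H → ℝ)
    (hqs : ∀ x y, 0 ≤ sconduct μ r x y)
    (hsupp : ∀ x y, sconduct μ r x y = 0 → φ x y = 0) :
    (∑ x, ∑ y, (h x - h y) * φ x y) ^ 2
      ≤ (∑ x, ∑ y, sconduct μ r x y * (h y - h x) ^ 2)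
        * ∑ x, ∑ y, φ x y ^ 2 / sconduct μ r x y := by
  have key := Finset.sum_mul_sq_le_sq_mul_sq Finset.univ
    (fun p : H × H => (h p.1 - h p.2) * Real.sqrt (sconduct μ r p.1 p.2))
    (fun p : H × H => φ p.1 p.2 / Real.sqrt (sconduct μ r p.1 p.2))
  have e1 : ∀ p : H × H, ((h p.1 - h p.2) * Real.sqrt (sconduct μ r p.1 p.2))
      * (φ p.1 p.2 / Real.sqrt (sconduct μ r p.1 p.2)) = (h p.1 - h p.2) * φ p.1 p.2 := by
    intro p
    rcases eq_or_lt_of_le (hqs p.1 p.2) with hq | hq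
    · rw [hsupp p.1 p.2 hq.symm]; ring
    · have hs : Real.sqrt (sconduct μ r p.1 p.2) ≠ 0 :=
        ne_of_gt (Real.sqrt_pos.mpr hq)
      field_simp
  have e2 : ∀ p : H × H, ((h p.1 - h p.2) * Real.sqrt (sconduct μ r p.1 p.2)) ^ 2
      = sconduct μ r p.1 p.2 * (h p.2 - h p.1) ^ 2 := by
    intro p
    rw [mul_pow, Real.sq_sqrt (hqs p.1 p.2)]
    ring
  have e3 : ∀ p : H × H, (φ p.1 p.2 / Real.sqrt (sconduct μ r p.1 p.2)) ^ 2
      = φ p.1 p.2 ^ 2 / sconduct μ r p.1 p.2 := by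
    intro p
    rw [div_pow, Real.sq_sqrt (hqs p.1 p.2)]
  simp only [e1, e2, e3] at key
  calc (∑ x, ∑ y, (h x - h y) * φ x y) ^ 2
      = (∑ p : H × H, (h p.1 - h p.2) * φ p.1 p.2) ^ 2 := by
        rw [Fintype.sum_prod_type]
    _ ≤ (∑ p : H × H, sconduct μ r p.1 p.2 * (h p.2 - h p.1) ^ 2)
        * ∑ p : H × H, φ p.1 p.2 ^ 2 / sconduct μ r p.1 p.2 := key
    _ = _ := by rw [Fintype.sum_prod_type, Fintype.sum_prod_type]

/-- **Thomson principle for non-reversible chains** (Theorem `thm:thomson`):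
`CAP(A,B)` is the supremum over functions `g` vanishing on `A ∪ B` and nonzero flows `ψ`
of `[Σ_x h_{A,B}(x)(DIV ψ)(x)]² / ‖Φ_g − ψ‖²`, and every nonzero constant multiple of
`(g,ψ) = ((h† − h)/(2CAP), (Φ_{h†} + Φ*_h)/(2CAP))` is a maximizer. -/
theorem thomson_principle [Fintype H]
    (r : H → H → ℝ) (hr : ∀ x y, 0 ≤ r x y) (hrr : ∀ x, r x x = 0)
    (hirr : ∀ x y : H, Relation.ReflTransGen (fun a b => 0 < r a b) x y)
    (μ : H → ℝ) (hμpos : ∀ x, 0 < μ x) (hμsum : ∑ x, μ x = 1)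
    (hμstat : ∀ x, ∑ y, μ y * r y x = μ x * ∑ y, r x y)
    (A B : Set H) (hA : A.Nonempty) (hB : B.Nonempty) (hAB : Disjoint A B)
    (h hd : H → ℝ)
    (hh : IsEqPotential r A B h)
    (hhd : IsEqPotential (fun x y => μ y * r y x / μ x) A B hd) :
    (∀ g : H → ℝ, (∀ x ∈ A ∪ B, g x = 0) →
      ∀ ψ : H → H → ℝ, IsFlow μ r ψ → ψ ≠ 0 →
        (∑ x, h x * flowDiv ψ x) ^ 2 /
            flowNorm2 μ r (fun x y => PhiFlow μ r g x y - ψ x y) ≤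
          capacityOf μ r h) ∧
    (∀ t : ℝ, t ≠ 0 →
      (∑ x, h x *
          flowDiv (fun x y =>
            t * ((PhiFlow μ r hd x y + PhiStar μ r h x y) / (2 * capacityOf μ r h))) x) ^ 2 /
        flowNorm2 μ r (fun x y =>
          PhiFlow μ r (fun z => t * ((hd z - h z) / (2 * capacityOf μ r h))) x y -
            t * ((PhiFlow μ r hd x y + PhiStar μ r h x y) / (2 * capacityOf μ r h)))
      = capacityOf μ r h) := by
  constructor
  · intro g hg ψ hψ _hψne
    have hc0 : ∀ x y, 0 ≤ μ x * r x y := fun x y => mul_nonneg (hμpos x).le (hr x y)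
    have hqs0 : ∀ x y, 0 ≤ sconduct μ r x y := fun x y => by
      have := hc0 x y; have := hc0 y x
      simp only [sconduct]; positivity
    have hqszero : ∀ x y, sconduct μ r x y = 0 → μ x * r x y = 0 ∧ μ y * r y x = 0 := by
      intro x y hq
      have hsum : μ x * r x y + μ y * r y x = 0 := by
        have : (μ x * r x y + μ y * r y x) / 2 = 0 := hq
        linarith
      constructor <;> nlinarith [hc0 x y, hc0 y x]
    set φ : H → H → ℝ := fun x y => PhiFlow μ r g x y - ψ x y with hφdef
    have hφanti : ∀ x y, φ x y = -φ y x := by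
      intro x y
      simp only [hφdef, PhiFlow, hψ.1 x y]
      ring
    have hφsupp : ∀ x y, sconduct μ r x y = 0 → φ x y = 0 := by
      intro x y hq
      obtain ⟨h1, h2⟩ := hqszero x y hq
      simp only [hφdef, PhiFlow, h1, h2, hψ.2 x y hq]
      ring
    -- I2: ∑ h x · DIV(Φ_g) = 0
    have hI2 : ∑ x, ∑ y, h x * PhiFlow μ r g x y = 0 := by
      have e1 : ∑ x, ∑ y, h x * PhiFlow μ r g x y
          = (∑ x, ∑ y, h x * (g y * (μ y * r y x)))
            - ∑ x, ∑ y, h x * (g x * (μ x * r x y)) := by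
        rw [← Finset.sum_sub_distrib]
        refine Finset.sum_congr rfl fun x _ => ?_
        rw [← Finset.sum_sub_distrib]
        exact Finset.sum_congr rfl fun y _ => by simp only [PhiFlow]; ring
      have e2 : ∑ x, ∑ y, h x * (g y * (μ y * r y x))
          = ∑ x, ∑ y, h y * (g x * (μ x * r x y)) :=
        sum_swap' (fun x y => h x * (g y * (μ y * r y x)))
      rw [e1, e2, ← Finset.sum_sub_distrib]
      refine Finset.sum_eq_zero fun x _ => ?_
      rw [← Finset.sum_sub_distrib]
      by_cases hx : x ∈ A ∪ B
      · refine Finset.sum_eq_zero fun y _ => by rw [hg x hx]; ring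
      · have harm := hh.2.2 x hx
        calc ∑ y, (h y * (g x * (μ x * r x y)) - h x * (g x * (μ x * r x y)))
            = g x * μ x * ∑ y, r x y * (h y - h x) := by
              rw [Finset.mul_sum]
              exact Finset.sum_congr rfl fun y _ => by ring
          _ = 0 := by rw [harm, mul_zero]
    -- numerator rewriting
    have hnum : ∑ x, h x * flowDiv ψ x = - ∑ x, ∑ y, h x * φ x y := by
      have : ∀ x, h x * flowDiv ψ x
          = (∑ y, h x * PhiFlow μ r g x y) - ∑ y, h x * φ x y := by
        intro x
        simp only [flowDiv, hφdef, ← Finset.sum_sub_distrib, Finset.mul_sum]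
        exact Finset.sum_congr rfl fun y _ => by ring
      rw [Finset.sum_congr rfl fun x _ => this x, Finset.sum_sub_distrib, hI2]
      ring
    -- the key inequality
    have hkey : (∑ x, h x * flowDiv ψ x) ^ 2
        ≤ capacityOf μ r h * flowNorm2 μ r φ := by
      rw [hnum, neg_sq, sum_antisym h φ hφanti]
      have hcs := cs_double μ r h φ hqs0 hφsupp
      have hsym := sym_cap μ r h
      rw [mul_pow]
      calc (1/2 : ℝ) ^ 2 * (∑ x, ∑ y, (h x - h y) * φ x y) ^ 2
          ≤ (1/2 : ℝ) ^ 2 * ((∑ x, ∑ y, sconduct μ r x y * (h y - h x) ^ 2)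
              * ∑ x, ∑ y, φ x y ^ 2 / sconduct μ r x y) := by
            have : (0:ℝ) ≤ (1/2 : ℝ)^2 := by norm_num
            exact mul_le_mul_of_nonneg_left hcs this
        _ = capacityOf μ r h * flowNorm2 μ r φ := by
            simp only [capacityOf, flowNorm2, ← hsym]
            ring
    have hC0 : 0 ≤ capacityOf μ r h := by
      apply mul_nonneg (by norm_num)
      exact Finset.sum_nonneg fun x _ => Finset.sum_nonneg fun y _ =>
        mul_nonneg (hc0 x y) (sq_nonneg _)
    have hD0 : 0 ≤ flowNorm2 μ r φ := by
      apply mul_nonneg (by norm_num)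
      refine Finset.sum_nonneg fun x _ => Finset.sum_nonneg fun y _ => ?_
      exact div_nonneg (sq_nonneg _) (hqs0 x y)
    rcases eq_or_lt_of_le hD0 with hD | hD
    · rw [← hD, div_zero]; exact hC0
    · exact (div_le_iff₀ hD).mpr hkey
  · intro t ht
    by_cases hc : capacityOf μ r h = 0
    · rw [hc]
      simp only [mul_zero, div_zero, flowDiv, flowNorm2, PhiFlow, PhiStar]
      simp [mul_zero, zero_mul, sub_zero]
    · set C := capacityOf μ r h with hCdef
      have h2C : (2:ℝ) * C ≠ 0 := mul_ne_zero two_ne_zero hc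
      -- harmonicity-based replacement
      have hS0 : ∀ x, (hd x - h x) * (∑ y, (μ x * r x y) * (h y - h x)) = 0 := by
        intro x
        by_cases hxA : x ∈ A
        · rw [hhd.1 x hxA, hh.1 x hxA]; ring
        by_cases hxB : x ∈ B
        · rw [hhd.2.1 x hxB, hh.2.1 x hxB]; ring
        · have hx : x ∉ A ∪ B := by
            simp only [Set.mem_union]
            tauto
          have harm := hh.2.2 x hx
          have h0 : ∑ y, (μ x * r x y) * (h y - h x) = 0 := by
            calc ∑ y, (μ x * r x y) * (h y - h x)
                = μ x * ∑ y, r x y * (h y - h x) := by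
                  rw [Finset.mul_sum]
                  exact Finset.sum_congr rfl fun y _ => by ring
              _ = 0 := by rw [harm, mul_zero]
          rw [h0, mul_zero]
      -- core identity
      have hcore : ∑ x, ∑ y, h x * (PhiFlow μ r hd x y + PhiStar μ r h x y) = -(2 * C) := by
        have step1 : ∑ x, ∑ y, h x * (PhiFlow μ r hd x y + PhiStar μ r h x y)
            = (∑ x, ∑ y, (h x * hd y - h x * h x) * (μ y * r y x))
              + ∑ x, ∑ y, (h x * h y - h x * hd x) * (μ x * r x y) := by
          rw [← Finset.sum_add_distrib]
          refine Finset.sum_congr rfl fun x _ => ?_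
          rw [← Finset.sum_add_distrib]
          exact Finset.sum_congr rfl fun y _ => by simp only [PhiFlow, PhiStar]; ring
        have step2 : ∑ x, ∑ y, (h x * hd y - h x * h x) * (μ y * r y x)
            = ∑ x, ∑ y, (h y * hd x - h y * h y) * (μ x * r x y) :=
          sum_swap' (fun x y => (h x * hd y - h x * h x) * (μ y * r y x))
        rw [step1, step2, ← Finset.sum_add_distrib]
        have step3 : ∀ x, (∑ y, (h y * hd x - h y * h y) * (μ x * r x y))
              + ∑ y, (h x * h y - h x * hd x) * (μ x * r x y)
            = (hd x - h x) * (∑ y, (μ x * r x y) * (h y - h x))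
              + ∑ y, -(μ x * r x y * (h y - h x) ^ 2) := by
          intro x
          rw [← Finset.sum_add_distrib, Finset.mul_sum, ← Finset.sum_add_distrib]
          exact Finset.sum_congr rfl fun y _ => by ring
        calc ∑ x, ((∑ y, (h y * hd x - h y * h y) * (μ x * r x y))
                + ∑ y, (h x * h y - h x * hd x) * (μ x * r x y))
            = ∑ x, ((hd x - h x) * (∑ y, (μ x * r x y) * (h y - h x))
                + ∑ y, -(μ x * r x y * (h y - h x) ^ 2)) :=
              Finset.sum_congr rfl fun x _ => step3 x
          _ = ∑ x, ∑ y, -(μ x * r x y * (h y - h x) ^ 2) := by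
              refine Finset.sum_congr rfl fun x _ => ?_
              rw [hS0 x, zero_add]
          _ = -(2 * C) := by
              rw [hCdef]
              simp only [capacityOf, Finset.sum_neg_distrib]
              ring
      -- numerator
      have hnum : ∑ x, h x *
          flowDiv (fun x y =>
            t * ((PhiFlow μ r hd x y + PhiStar μ r h x y) / (2 * C))) x = -t := by
        have e : ∀ x, h x * (∑ y, t * ((PhiFlow μ r hd x y + PhiStar μ r h x y) / (2 * C)))
            = ∑ y, (t / (2 * C)) * (h x * (PhiFlow μ r hd x y + PhiStar μ r h x y)) := by
          intro x
          rw [Finset.mul_sum]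
          exact Finset.sum_congr rfl fun y _ => by ring
        calc ∑ x, h x * flowDiv (fun x y =>
              t * ((PhiFlow μ r hd x y + PhiStar μ r h x y) / (2 * C))) x
            = ∑ x, ∑ y, (t / (2 * C)) * (h x * (PhiFlow μ r hd x y + PhiStar μ r h x y)) :=
              Finset.sum_congr rfl fun x _ => e x
          _ = (t / (2 * C)) * ∑ x, ∑ y, h x * (PhiFlow μ r hd x y + PhiStar μ r h x y) := by
              rw [Finset.mul_sum]
              exact Finset.sum_congr rfl fun x _ => by rw [Finset.mul_sum]
          _ = -t := by rw [hcore]; field_simp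
      -- denominator
      have hphi : ∀ x y, PhiFlow μ r (fun z => t * ((hd z - h z) / (2 * C))) x y -
          t * ((PhiFlow μ r hd x y + PhiStar μ r h x y) / (2 * C))
          = -(t / C) * (sconduct μ r x y * (h y - h x)) := by
        intro x y
        simp only [PhiFlow, PhiStar, sconduct]
        field_simp
        ring
      have hden : flowNorm2 μ r (fun x y =>
          PhiFlow μ r (fun z => t * ((hd z - h z) / (2 * C))) x y -
            t * ((PhiFlow μ r hd x y + PhiStar μ r h x y) / (2 * C))) = t ^ 2 / C := by
        have hterm : ∀ x y, (-(t / C) * (sconduct μ r x y * (h y - h x))) ^ 2 / sconduct μ r x y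
            = (t / C) ^ 2 * (sconduct μ r x y * (h y - h x) ^ 2) := by
          intro x y
          rcases eq_or_ne (sconduct μ r x y) 0 with hq | hq
          · simp [hq]
          · field_simp
        calc flowNorm2 μ r (fun x y =>
              PhiFlow μ r (fun z => t * ((hd z - h z) / (2 * C))) x y -
                t * ((PhiFlow μ r hd x y + PhiStar μ r h x y) / (2 * C)))
            = (1/2) * ∑ x, ∑ y, (t / C) ^ 2 * (sconduct μ r x y * (h y - h x) ^ 2) := by
              simp only [flowNorm2]
              congr 1
              refine Finset.sum_congr rfl fun x _ => Finset.sum_congr rfl fun y _ => ?_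
              rw [hphi x y, hterm x y]
          _ = (t / C) ^ 2 * ((1/2) * ∑ x, ∑ y, sconduct μ r x y * (h y - h x) ^ 2) := by
              simp only [← Finset.mul_sum]
              ring
          _ = t ^ 2 / C := by
              rw [sym_cap μ r h]
              have : (1/2 : ℝ) * ∑ x, ∑ y, μ x * r x y * (h y - h x) ^ 2 = C := by
                rw [hCdef]; rfl
              rw [this]
              field_simp
      rw [hnum, hden]
      rw [neg_sq]
      rw [div_div_eq_mul_div]
      rw [mul_comm, mul_div_assoc, div_self (pow_ne_zero 2 ht), mul_one]
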